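/- For every positive integer w, a PDP(5, 5w) exists if and only if w ≥ 5. -/
import Mathlib

/-- A parallel class on the point set `α`: a collection of pairwise disjoint
blocks, each of size `k`, whose union is all of `α`. -/
def IsParallelClass {α : Type} (k : ℕ) (P : Finset (Finset α)) : Prop :=
  (∀ B ∈ P, B.card = k) ∧ (∀ x : α, ∃! B, B ∈ P ∧ x ∈ B)

/-- No pair of distinct points occurs in more than one block among the blocks of
the parallel classes `P 0, …, P (k-1)` (blocks in different classes being regarded
as distinct). -/
def PairCondition {α : Type} (k : ℕ) (P : Fin k → Finset (Finset α)) : Prop :=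
  ∀ x y : α, x ≠ y → ∀ i j : Fin k, ∀ B ∈ P i, ∀ B' ∈ P j,
    x ∈ B → y ∈ B → x ∈ B' → y ∈ B' → i = j ∧ B = B'

/-- There is a system of distinct representatives for the blocks: an assignment of a
point `h (i, B) ∈ B` to each block `B` of each parallel class `P i`, under which every
point of `α` is assigned to exactly one block. -/
def HasSDR {α : Type} (k : ℕ) (P : Fin k → Finset (Finset α)) : Prop :=
  ∃ h : Fin k × Finset α → α,
    (∀ i : Fin k, ∀ B ∈ P i, h (i, B) ∈ B) ∧
    (∀ x : α, ∃! p : Fin k × Finset α, p.2 ∈ P p.1 ∧ h p = x)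

/-- `P 0, …, P (k-1)` form a PDP with `k` courses on the point set `α`. -/
def IsPDP {α : Type} (k : ℕ) (P : Fin k → Finset (Finset α)) : Prop :=
  (∀ i : Fin k, IsParallelClass k (P i)) ∧ PairCondition k P ∧ HasSDR k P

/-- A PDP(k, v) exists. -/
def PDPExists (k v : ℕ) : Prop :=
  ∃ P : Fin k → Finset (Finset (Fin v)), IsPDP k P

section Construct

variable {w : ℕ} [NeZero w] (b : Fin 5 → Fin 5 → ZMod w) (e : Fin 5 × ZMod w ≃ Fin (5 * w))

/-- Block `c` of parallel class `j` in the grid construction. -/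
def pdpBlk (j : Fin 5) (c : ZMod w) : Finset (Fin (5 * w)) :=
  Finset.univ.image (fun i : Fin 5 => e (i, c + b j i))

/-- Parallel class `j` in the grid construction. -/
def pdpP (j : Fin 5) : Finset (Finset (Fin (5 * w))) :=
  Finset.univ.image (pdpBlk b e j)

lemma pdpBlk_inj (j : Fin 5) (c : ZMod w) :
    Function.Injective (fun i : Fin 5 => e (i, c + b j i)) := by
  intro a a' h
  have h2 := e.injective h
  exact (Prod.mk.injEq _ _ _ _ ▸ h2).1

lemma mem_pdpBlk (x : Fin (5 * w)) (j : Fin 5) (c : ZMod w) :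
    x ∈ pdpBlk b e j c ↔ c + b j (e.symm x).1 = (e.symm x).2 := by
  simp only [pdpBlk, Finset.mem_image, Finset.mem_univ, true_and]
  constructor
  · rintro ⟨i, hi⟩
    have h2 : (i, c + b j i) = e.symm x := by rw [← hi, Equiv.symm_apply_apply]
    rw [← h2]
  · intro hz
    refine ⟨(e.symm x).1, ?_⟩
    rw [hz, Prod.mk.eta, Equiv.apply_symm_apply]

lemma pdp_sum (j : Fin 5) (c : ZMod w) :
    (∑ x ∈ pdpBlk b e j c, if (e.symm x).1 = j then (e.symm x).2 else 0) = c + b j j := by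
  rw [pdpBlk, Finset.sum_image (fun x _ y _ h => pdpBlk_inj b e j c h)]
  simp [Finset.sum_ite_eq']

lemma pdp_isPDP
    (H : ∀ j j' : Fin 5, j ≠ j' → ∀ i i' : Fin 5, i ≠ i' →
      b j i' - b j i ≠ b j' i' - b j' i) :
    IsPDP 5 (pdpP b e) := by
  refine ⟨?_, ?_, ?_⟩
  · -- parallel classes
    intro j
    constructor
    · rintro B hB
      rw [pdpP, Finset.mem_image] at hB
      obtain ⟨c, -, rfl⟩ := hB
      rw [pdpBlk, Finset.card_image_of_injective _ (pdpBlk_inj b e j c)]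
      simp
    · intro x
      refine ⟨pdpBlk b e j ((e.symm x).2 - b j (e.symm x).1), ⟨?_, ?_⟩, ?_⟩
      · rw [pdpP]; exact Finset.mem_image_of_mem _ (Finset.mem_univ _)
      · rw [mem_pdpBlk]; ring
      · rintro B ⟨hB, hxB⟩
        rw [pdpP, Finset.mem_image] at hB
        obtain ⟨c, -, rfl⟩ := hB
        rw [mem_pdpBlk] at hxB
        congr 1
        linear_combination hxB
  · -- pair condition
    intro x y hxy i j B hB B' hB' hxB hyB hxB' hyB'
    rw [pdpP, Finset.mem_image] at hB hB'
    obtain ⟨c, -, rfl⟩ := hB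
    obtain ⟨c', -, rfl⟩ := hB'
    rw [mem_pdpBlk] at hxB hyB hxB' hyB'
    have hrxy : (e.symm x).1 ≠ (e.symm y).1 := by
      intro h
      apply hxy
      have h2 : (e.symm x) = (e.symm y) := by
        apply Prod.ext h
        rw [← hxB, ← hyB, h]
      have := congrArg e h2
      simpa using this
    have hij : i = j := by
      by_contra hne
      exact H i j hne (e.symm x).1 (e.symm y).1 hrxy (by linear_combination hyB - hxB - hyB' + hxB')
    subst hij
    refine ⟨rfl, ?_⟩
    congr 1
    linear_combination hxB - hxB'
  · -- SDR
    refine ⟨fun p => e (p.1, ∑ x ∈ p.2, if (e.symm x).1 = p.1 then (e.symm x).2 else 0), ?_, ?_⟩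
    · intro j B hB
      rw [pdpP, Finset.mem_image] at hB
      obtain ⟨c, -, rfl⟩ := hB
      show e (j, ∑ x ∈ pdpBlk b e j c, if (e.symm x).1 = j then (e.symm x).2 else 0) ∈
        pdpBlk b e j c
      rw [pdp_sum b e j c, mem_pdpBlk]
      rw [Equiv.symm_apply_apply]
    · intro x
      refine ⟨(⟨(e.symm x).1, pdpBlk b e (e.symm x).1 ((e.symm x).2 - b (e.symm x).1 (e.symm x).1)⟩ :
          Fin 5 × Finset (Fin (5 * w))), ⟨?_, ?_⟩, ?_⟩
      · rw [pdpP]; exact Finset.mem_image_of_mem _ (Finset.mem_univ _)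
      · show e (_, _) = x
        rw [pdp_sum]
        rw [sub_add_cancel, Prod.mk.eta, Equiv.apply_symm_apply]
      · rintro ⟨j, B⟩ ⟨hB, hhx⟩
        dsimp only at hB hhx
        rw [pdpP, Finset.mem_image] at hB
        obtain ⟨c, -, rfl⟩ := hB
        have hhx' : e (j, c + b j j) = x := by
          rw [← hhx]; congr 1; exact congrArg _ (pdp_sum b e j c).symm
        have h2 : (j, c + b j j) = e.symm x := by rw [← hhx', Equiv.symm_apply_apply]
        have hj : j = (e.symm x).1 := by rw [← h2]
        have hc : c + b j j = (e.symm x).2 := by rw [← h2]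
        subst hj
        have hc2 : c = (e.symm x).2 - b (e.symm x).1 (e.symm x).1 := by linear_combination hc
        rw [hc2]
  
end Construct

lemma pdp_key (w : ℕ) (h5 : 5 ≤ w) (h6 : w ≠ 6) (h8 : w ≠ 8) (h9 : w ≠ 9)
    (h12 : w ≠ 12) (h16 : w ≠ 16) (a c : ℕ) (ha1 : 1 ≤ a) (ha : a ≤ 4)
    (hc1 : 1 ≤ c) (hc : c ≤ 4) : ¬ w ∣ a * c := by
  intro hd
  have h1 : w ≤ 16 := le_trans (Nat.le_of_dvd (by positivity) hd) (by nlinarith)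
  interval_cases a <;> interval_cases c <;> interval_cases w <;> omega

lemma pdp_generic_H (w : ℕ) (h5 : 5 ≤ w) (h6 : w ≠ 6) (h8 : w ≠ 8) (h9 : w ≠ 9)
    (h12 : w ≠ 12) (h16 : w ≠ 16) :
    ∀ j j' : Fin 5, j ≠ j' → ∀ i i' : Fin 5, i ≠ i' →
      ((j : ℕ) : ZMod w) * ((i' : ℕ) : ZMod w) - ((j : ℕ) : ZMod w) * ((i : ℕ) : ZMod w) ≠
      ((j' : ℕ) : ZMod w) * ((i' : ℕ) : ZMod w) - ((j' : ℕ) : ZMod w) * ((i : ℕ) : ZMod w) := by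
  intro j j' hj i i' hi heq
  haveI : NeZero w := ⟨by omega⟩
  have h1 : (((((j : ℕ) : ℤ) - ((j' : ℕ) : ℤ)) * (((i' : ℕ) : ℤ) - ((i : ℕ) : ℤ)) : ℤ) :
      ZMod w) = 0 := by
    push_cast
    linear_combination heq
  rw [ZMod.intCast_zmod_eq_zero_iff_dvd] at h1
  have h2 := Int.natAbs_dvd_natAbs.mpr h1
  rw [Int.natAbs_mul, Int.natAbs_natCast] at h2
  have hjv : (j : ℕ) ≠ (j' : ℕ) := fun h => hj (Fin.ext h)
  have hiv : (i : ℕ) ≠ (i' : ℕ) := fun h => hi (Fin.ext h)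
  have hj5 : (j : ℕ) < 5 := j.isLt
  have hj'5 : (j' : ℕ) < 5 := j'.isLt
  have hi5 : (i : ℕ) < 5 := i.isLt
  have hi'5 : (i' : ℕ) < 5 := i'.isLt
  exact pdp_key w h5 h6 h8 h9 h12 h16 _ _ (by omega) (by omega) (by omega) (by omega) h2

/-- Good matrix for `w = 6`. -/
def pdpB6 : Fin 5 → Fin 5 → ZMod 6 :=
  ![![0,0,0,0,0], ![0,1,2,3,4], ![0,2,4,1,3], ![0,4,1,5,2], ![0,5,3,2,1]]

/-- Good matrix for `w = 8`. -/
def pdpB8 : Fin 5 → Fin 5 → ZMod 8 :=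
  ![![0,0,0,0,0], ![0,1,2,3,4], ![0,2,1,5,7], ![0,3,5,2,1], ![0,4,7,1,6]]

/-- Good matrix for `w = 9`. -/
def pdpB9 : Fin 5 → Fin 5 → ZMod 9 :=
  ![![0,0,0,0,0], ![0,1,2,3,4], ![0,2,1,5,7], ![0,3,5,2,1], ![0,4,7,1,5]]

/-- Good matrix for `w = 12`. -/
def pdpB12 : Fin 5 → Fin 5 → ZMod 12 :=
  ![![0,0,0,0,0], ![0,1,2,3,4], ![0,2,1,5,7], ![0,3,5,1,9], ![0,4,7,9,2]]

/-- Good matrix for `w = 16`. -/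
def pdpB16 : Fin 5 → Fin 5 → ZMod 16 :=
  ![![0,0,0,0,0], ![0,1,2,3,4], ![0,2,1,5,7], ![0,3,5,1,9], ![0,4,7,9,2]]

lemma pdp_exists_of (w : ℕ) (hw : 0 < w) (b : Fin 5 → Fin 5 → ZMod w)
    (H : ∀ j j' : Fin 5, j ≠ j' → ∀ i i' : Fin 5, i ≠ i' →
      b j i' - b j i ≠ b j' i' - b j' i) : PDPExists 5 (5 * w) := by
  haveI : NeZero w := ⟨hw.ne'⟩
  have hcard : Fintype.card (Fin 5 × ZMod w) = 5 * w := by simp [ZMod.card]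
  exact ⟨pdpP b (Fintype.equivFinOfCardEq hcard),
    pdp_isPDP b (Fintype.equivFinOfCardEq hcard) H⟩

lemma pdp_not_exists (w : ℕ) (hw : 0 < w) (hw4 : w ≤ 4) : ¬ PDPExists 5 (5 * w) := by
  rintro ⟨P, hpar, hpair, -⟩
  have hv : 0 < 5 * w := by omega
  set x : Fin (5 * w) := ⟨0, hv⟩ with hxdef
  have hex : ∀ i : Fin 5, ∃ B, B ∈ P i ∧ x ∈ B := fun i => ((hpar i).2 x).exists
  choose B hBP hxB using hex
  have hcard : ∀ i, ((B i).erase x).card = 4 := by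
    intro i
    rw [Finset.card_erase_of_mem (hxB i), (hpar i).1 _ (hBP i)]
  have hdisj : ∀ i j : Fin 5, i ≠ j → Disjoint ((B i).erase x) ((B j).erase x) := by
    intro i j hij
    rw [Finset.disjoint_left]
    intro y hyi hyj
    exact hij (hpair x y (Finset.ne_of_mem_erase hyi).symm i j (B i) (hBP i) (B j) (hBP j)
      (hxB i) (Finset.mem_of_mem_erase hyi) (hxB j) (Finset.mem_of_mem_erase hyj)).1
  have hU : (Finset.univ.biUnion (fun i : Fin 5 => (B i).erase x)).card = 20 := by
    rw [Finset.card_biUnion (fun i _ j _ h => hdisj i j h)]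
    simp [hcard]
  have hxU : x ∉ Finset.univ.biUnion (fun i : Fin 5 => (B i).erase x) := by
    simp [Finset.mem_biUnion]
  have h21 : (insert x (Finset.univ.biUnion (fun i : Fin 5 => (B i).erase x))).card = 21 := by
    rw [Finset.card_insert_of_notMem hxU, hU]
  have hle := Finset.card_le_univ (insert x (Finset.univ.biUnion (fun i : Fin 5 => (B i).erase x)))
  rw [h21, Fintype.card_fin] at hle
  omega

/-- For every positive integer `w`, a PDP(5, 5w) exists if and only if `w ≥ 5`. -/
theorem pdp_five_iff (w : ℕ) (hw : 0 < w) : PDPExists 5 (5 * w) ↔ 5 ≤ w := by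
  constructor
  · intro h
    by_contra hlt
    exact pdp_not_exists w hw (by omega) h
  · intro h5
    by_cases h6 : w = 6
    · subst h6; exact pdp_exists_of 6 (by norm_num) pdpB6 (by decide)
    by_cases h8 : w = 8
    · subst h8; exact pdp_exists_of 8 (by norm_num) pdpB8 (by decide)
    by_cases h9 : w = 9
    · subst h9; exact pdp_exists_of 9 (by norm_num) pdpB9 (by decide)
    by_cases h12 : w = 12
    · subst h12; exact pdp_exists_of 12 (by norm_num) pdpB12 (by decide)
    by_cases h16 : w = 16
    · subst h16; exact pdp_exists_of 16 (by norm_num) pdpB16 (by decide)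
    exact pdp_exists_of w hw (fun j i => ((j : ℕ) : ZMod w) * ((i : ℕ) : ZMod w))
      (pdp_generic_H w h5 h6 h8 h9 h12 h16)
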